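/- arXiv:0802.1380 — 2 statements merged into one kernel-verified Lean document; each statement's English description precedes it below -/
import Mathlib

section
/- Let (A_n)_{n≥1} be a sequence of convex, closed and bounded subsets of ℝ² such that the sequence (n·A_n) is sub-additive, meaning that for all n ≥ 1 and all N > n one has N·A_N ⊆ n·A_n + (N−n)·A_{N−n} (Minkowski sum and scalar dilation). Then the sequence (A_n) converges and its limit equals the closure of ⋂_{n≥1} A_n; that is, liminf A_n = limsup A_n = cl(⋂_{n≥1} A_n). -/
open Pointwise Filter

/-- `liminf` of a sequence of subsets of `ℝ²` (indexed by `n ≥ 1`): the set of points `a`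
for which there exist points `x n ∈ A n` (for all `n ≥ 1`) with `x n → a`. -/
def setLimInf (A : ℕ → Set (ℝ × ℝ)) : Set (ℝ × ℝ) :=
  {a | ∃ x : ℕ → ℝ × ℝ, (∀ n, 1 ≤ n → x n ∈ A n) ∧ Tendsto x atTop (nhds a)}

/-- `limsup` of a sequence of subsets of `ℝ²` (indexed by `n ≥ 1`): the set of points `a`
for which there exist a strictly increasing sequence of indices `φ k ≥ 1` and points
`x k ∈ A (φ k)` with `x k → a`. -/
def setLimSup (A : ℕ → Set (ℝ × ℝ)) : Set (ℝ × ℝ) :=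
  {a | ∃ φ : ℕ → ℕ, StrictMono φ ∧ (∀ k, 1 ≤ φ k) ∧
    ∃ x : ℕ → ℝ × ℝ, (∀ k, x k ∈ A (φ k)) ∧ Tendsto x atTop (nhds a)}

/-!
For convex `A_m`, sub-additivity gives `(q+1)m • A_{(q+1)m} ⊆ qm • A_m + m • A_m = (q+1)m • A_m`,
so `A_{qm} ⊆ A_m` for every `q ≥ 1`. Writing `N = qm + r` with `0 < r < m`, sub-additivity
once more presents each `x ∈ A_N` as `(1 - r/N) u + (r/N) v` with `u ∈ A_m`, `v ∈ A_r`, so `x`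
lies within `(m/N) · diam (A_1 ∪ ⋯ ∪ A_m)` of `A_m`. Hence every limit of points of `A_{φ k}`,
`φ k → ∞`, lies in the closed set `A_m` for every `m`: the limsup is contained in `⋂ A_m`,
which is trivially contained in the liminf.
-/

open Metric Set

/-- The paper's sub-additivity of the sequence `(n • A n)_{n ≥ 1}`. -/
def IsSubadditiveDilation {E : Type*} [AddCommGroup E] [Module ℝ E] (A : ℕ → Set E) :
    Prop :=
  ∀ n N : ℕ, 1 ≤ n → n < N → (N : ℝ) • A N ⊆ (n : ℝ) • A n + ((N - n : ℕ) : ℝ) • A (N - n)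

namespace IsSubadditiveDilation

variable {E : Type*} [NormedAddCommGroup E] [NormedSpace ℝ E] {A : ℕ → Set E}

theorem mul_subset (hA : IsSubadditiveDilation A) {m : ℕ} (hm : 1 ≤ m)
    (hconv : Convex ℝ (A m)) {q : ℕ} (hq : 1 ≤ q) : A (q * m) ⊆ A m := by
  induction q, hq using Nat.le_induction with
  | base => rw [one_mul]
  | succ q hq ih =>
    have hstep := hA (q * m) ((q + 1) * m) (Nat.mul_pos hq hm)
      (Nat.mul_lt_mul_of_pos_right q.lt_succ_self hm)
    rw [show (q + 1) * m - q * m = m by rw [add_one_mul, Nat.add_sub_cancel_left]] at hstep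
    have hsplit :
        ((q * m : ℕ) : ℝ) • A m + (m : ℝ) • A m = (((q + 1) * m : ℕ) : ℝ) • A m := by
      rw [← hconv.add_smul (by positivity) (by positivity)]
      push_cast
      congr 1
      ring
    have hpos : (((q + 1) * m : ℕ) : ℝ) ≠ 0 := by positivity
    refine (smul_set_subset_smul_set_iff₀ hpos).mp ?_
    exact hsplit ▸ hstep.trans (add_subset_add (smul_set_mono ih) subset_rfl)

theorem exists_dist_le (hA : IsSubadditiveDilation A) {m N : ℕ} (hm : 1 ≤ m)
    (hconv : Convex ℝ (A m)) (hbd : Bornology.IsBounded (⋃ n ∈ Icc 1 m, A n)) (hmN : m ≤ N)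
    {x : E} (hx : x ∈ A N) :
    ∃ u ∈ A m, dist x u ≤ m / N * diam (⋃ n ∈ Icc 1 m, A n) := by
  obtain ⟨q, r, hrm, hN⟩ : ∃ q r, r < m ∧ N = q * m + r :=
    ⟨N / m, N % m, Nat.mod_lt N hm, by rw [mul_comm]; exact (Nat.div_add_mod N m).symm⟩
  have hq : 1 ≤ q := Nat.pos_of_ne_zero (by rintro rfl; omega)
  rcases Nat.eq_zero_or_pos r with rfl | hr
  · refine ⟨x, hA.mul_subset hm hconv hq (by rwa [hN, add_zero] at hx), ?_⟩
    rw [dist_self]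
    positivity
  have hsub := hA (q * m) N (Nat.mul_pos hq hm) (by omega)
  rw [show N - q * m = r by rw [hN, Nat.add_sub_cancel_left]] at hsub
  obtain ⟨_, ⟨u, hu, rfl⟩, _, ⟨v, hv, rfl⟩, hsum⟩ := hsub (smul_mem_smul_set hx)
  have hN0 : (N : ℝ) ≠ 0 := Nat.cast_ne_zero.mpr (by omega)
  have hline : x = AffineMap.lineMap u v ((r : ℝ) / N) := by
    rw [AffineMap.lineMap_apply_module, ← inv_smul_smul₀ hN0 x, ← hsum, smul_add, smul_smul,
      smul_smul]
    congr 2 <;> field_simp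
    rw [hN]; push_cast; ring
  have hum : u ∈ A m := hA.mul_subset hm hconv hq hu
  refine ⟨u, hum, ?_⟩
  rw [hline, dist_lineMap_left, Real.norm_of_nonneg (by positivity)]
  gcongr
  exact dist_le_diam_of_mem hbd (mem_biUnion (mem_Icc.mpr ⟨hm, le_rfl⟩) hum)
    (mem_biUnion (mem_Icc.mpr ⟨hr, hrm.le⟩) hv)

theorem mem_of_tendsto (hA : IsSubadditiveDilation A) {m : ℕ} (hm : 1 ≤ m)
    (hconv : Convex ℝ (A m)) (hclosed : IsClosed (A m))
    (hbd : Bornology.IsBounded (⋃ n ∈ Icc 1 m, A n)) {φ : ℕ → ℕ} (hφ : Tendsto φ atTop atTop)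
    {x : ℕ → E} (hx : ∀ k, x k ∈ A (φ k)) {a : E} (ha : Tendsto x atTop (nhds a)) : a ∈ A m := by
  rw [← hclosed.closure_eq, Metric.mem_closure_iff]
  intro ε hε
  have hgap : Tendsto (fun k => m / (φ k : ℝ) * diam (⋃ n ∈ Icc 1 m, A n)) atTop (nhds 0) := by
    simpa using (tendsto_const_nhds.div_atTop
      (tendsto_natCast_atTop_atTop.comp hφ)).mul_const (diam (⋃ n ∈ Icc 1 m, A n))
  obtain ⟨k, hmk, hxk, hgapk⟩ := (hφ.eventually_ge_atTop m |>.and <|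
    (tendsto_iff_dist_tendsto_zero.mp ha).eventually (gt_mem_nhds (half_pos hε)) |>.and <|
    hgap.eventually (gt_mem_nhds (half_pos hε))).exists
  obtain ⟨u, hu, hxu⟩ := hA.exists_dist_le hm hconv hbd hmk (hx k)
  refine ⟨u, hu, ?_⟩
  calc dist a u ≤ dist (x k) a + dist (x k) u := dist_triangle_left a u (x k)
    _ < ε := by linarith

end IsSubadditiveDilation

theorem iInter_subset_setLimInf (A : ℕ → Set (ℝ × ℝ)) :
    ⋂ n, ⋂ (_ : 1 ≤ n), A n ⊆ setLimInf A :=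
  fun a ha => ⟨fun _ => a, fun n hn => mem_iInter₂.mp ha n hn, tendsto_const_nhds⟩

theorem setLimInf_subset_setLimSup (A : ℕ → Set (ℝ × ℝ)) : setLimInf A ⊆ setLimSup A := by
  rintro a ⟨x, hx, hlim⟩
  exact ⟨(· + 1), strictMono_id.add_const 1, fun k => Nat.le_add_left 1 k,
    fun k => x (k + 1), fun k => hx (k + 1) (Nat.le_add_left 1 k),
    hlim.comp (tendsto_add_atTop_nat 1)⟩

/-- If `(A_n)_{n ≥ 1}` is a sequence of convex, closed and bounded subsets of `ℝ²` such that
`(n • A_n)` is sub-additive (`N • A_N ⊆ n • A_n + (N - n) • A_{N-n}` for `1 ≤ n < N`), then the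
sequence converges and its limit is the closure of `⋂_{n ≥ 1} A_n`. -/
theorem subAdditive_regions_converge_to_intersection (A : ℕ → Set (ℝ × ℝ))
    (hconv : ∀ n, 1 ≤ n → Convex ℝ (A n))
    (hclosed : ∀ n, 1 ≤ n → IsClosed (A n))
    (hbd : ∀ n, 1 ≤ n → Bornology.IsBounded (A n))
    (hsub : ∀ n N : ℕ, 1 ≤ n → n < N →
      (N : ℝ) • A N ⊆ (n : ℝ) • A n + ((N - n : ℕ) : ℝ) • A (N - n)) :
    setLimInf A = closure (⋂ n, ⋂ (_ : 1 ≤ n), A n) ∧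
    setLimSup A = closure (⋂ n, ⋂ (_ : 1 ≤ n), A n) := by
  have hB : IsClosed (⋂ n, ⋂ (_ : 1 ≤ n), A n) :=
    isClosed_iInter fun n => isClosed_iInter fun hn => hclosed n hn
  have hlimsup : setLimSup A ⊆ ⋂ n, ⋂ (_ : 1 ≤ n), A n := by
    rintro a ⟨φ, hφ, -, x, hx, ha⟩
    refine mem_iInter₂.mpr fun m hm => IsSubadditiveDilation.mem_of_tendsto hsub hm (hconv m hm)
      (hclosed m hm) ?_ hφ.tendsto_atTop hx ha
    exact (Bornology.isBounded_biUnion (finite_Icc 1 m)).mpr fun n hn => hbd n hn.1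
  rw [hB.closure_eq]
  exact ⟨subset_antisymm ((setLimInf_subset_setLimSup A).trans hlimsup) (iInter_subset_setLimInf A),
    subset_antisymm hlimsup ((iInter_subset_setLimInf A).trans (setLimInf_subset_setLimSup A))⟩
end

section
/- Let N ≥ 1, let 𝒳₁, 𝒳₂, 𝒴 be finite nonempty sets, and let X₁ = (X_{1,1},…,X_{1,N}), X₂ = (X_{2,1},…,X_{2,N}), Y = (Y_1,…,Y_N) be random vectors on a common probability space such that: (i) X₁^N and X₂^N are independent, and (ii) for every i ∈ {1,…,N}, Y_i is conditionally independent of (X₁^N, X₂^N) given (X₁^i, X₂^i, Y^{i−1}) (these two conditions express that the joint law factorizes as Q(x₁^N) Q(x₂^N) ∏_{i=1}^N P(y_i | y^{i−1}, x₁^i, x₂^i), i.e. there is no feedback and the channel is causal). Then the conditional mutual information equals the causally conditioned directed information: I(X₁^N ; Y^N | X₂^N) = I(X₁^N → Y^N ‖ X₂^N) = ∑_{i=1}^{N} I(X₁^i ; Y_i | Y^{i−1}, X₂^i). -/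
/-!
Write `I(X₁; Y | X₂) = H(Y | X₂) - H(Y | X₁, X₂)` and expand both conditional entropies by the
chain rule along `Y`, so that the `i`-th terms are `H(Yᵢ | Y^{i-1}, X₂)` and
`H(Yᵢ | Y^{i-1}, X₁, X₂)`. Causality of the channel lets one replace `(X₁, X₂)` by the prefixes
`(X₁^i, X₂^i)` in the second. For the first, independence of the inputs and causality give, by
induction on `n` and the semigraphoid rules (weak union, contraction), that `(X₁, Y^n)` is
conditionally independent of `X₂` given `X₂^n`; hence `Yᵢ` is conditionally independent of `X₂`
given `(Y^{i-1}, X₂^i)`, and `X₂` may be replaced by `X₂^i`. The difference of the two terms is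
then `I(X₁^i; Yᵢ | Y^{i-1}, X₂^i)`.
-/

open Finset

set_option synthInstance.maxSize 1000

/-- Probability mass of the event `X = a` under the weight function `μ` on the finite
sample space `Ω`. -/
noncomputable def pmass {Ω α : Type*} [Fintype Ω] [DecidableEq α]
    (μ : Ω → ℝ) (X : Ω → α) (a : α) : ℝ := ∑ ω, if X ω = a then μ ω else 0

/-- Shannon entropy (natural logarithm) of the discrete random variable `X` defined on the
finite probability space `(Ω, μ)`. -/
noncomputable def entropy {Ω α : Type*} [Fintype Ω] [Fintype α] [DecidableEq α]
    (μ : Ω → ℝ) (X : Ω → α) : ℝ := ∑ a, Real.negMulLog (pmass μ X a)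

/-- Conditional mutual information `I(X;Y|Z) = H(X,Z) + H(Y,Z) - H(X,Y,Z) - H(Z)`. -/
noncomputable def condMutualInfo {Ω α β γ : Type*} [Fintype Ω]
    [Fintype α] [DecidableEq α] [Fintype β] [DecidableEq β] [Fintype γ] [DecidableEq γ]
    (μ : Ω → ℝ) (X : Ω → α) (Y : Ω → β) (Z : Ω → γ) : ℝ :=
  entropy μ (fun ω => (X ω, Z ω)) + entropy μ (fun ω => (Y ω, Z ω))
    - entropy μ (fun ω => ((X ω, Y ω), Z ω)) - entropy μ Z

section FiniteProbability

variable {Ω α β : Type*} [Fintype Ω] {μ : Ω → ℝ} [DecidableEq α] [DecidableEq β]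

lemma pmass_congr {F : Ω → α} {G : Ω → β} {a : α} {b : β} (h : ∀ ω, F ω = a ↔ G ω = b) :
    pmass μ F a = pmass μ G b :=
  sum_congr rfl fun ω _ => if_congr (h ω) rfl rfl

lemma pmass_nonneg (hμ : ∀ ω, 0 ≤ μ ω) (F : Ω → α) (a : α) : 0 ≤ pmass μ F a :=
  sum_nonneg fun ω _ => ite_nonneg (hμ ω) le_rfl

lemma pmass_mono (hμ : ∀ ω, 0 ≤ μ ω) {F : Ω → α} {G : Ω → β} {a : α} {b : β}
    (h : ∀ ω, F ω = a → G ω = b) : pmass μ F a ≤ pmass μ G b :=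
  sum_le_sum fun ω _ => by
    by_cases hω : F ω = a
    · simp [hω, h ω hω]
    · simp [hω, ite_nonneg (hμ ω) le_rfl]

lemma pmass_eq_zero_of_imp (hμ : ∀ ω, 0 ≤ μ ω) {F : Ω → α} {G : Ω → β} {a : α} {b : β}
    (h : ∀ ω, F ω = a → G ω = b) (hG : pmass μ G b = 0) : pmass μ F a = 0 :=
  le_antisymm (hG ▸ pmass_mono hμ h) (pmass_nonneg hμ F a)

lemma pmass_eq_zero {F : Ω → α} {a : α} (h : ∀ ω, F ω ≠ a) : pmass μ F a = 0 :=
  sum_eq_zero fun ω _ => if_neg (h ω)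

lemma le_pmass_self (hμ : ∀ ω, 0 ≤ μ ω) (F : Ω → α) (ω : Ω) : μ ω ≤ pmass μ F (F ω) := by
  simpa [pmass] using single_le_sum (f := fun ω' => if F ω' = F ω then μ ω' else 0)
    (fun ω' _ => ite_nonneg (hμ ω') le_rfl) (mem_univ ω)

lemma pmass_self_pos (hμ : ∀ ω, 0 ≤ μ ω) (F : Ω → α) {ω : Ω} (hω : 0 < μ ω) :
    0 < pmass μ F (F ω) :=
  hω.trans_le (le_pmass_self hμ F ω)

lemma pmass_eq_sum_pmass_prod [Fintype β] (F : Ω → α) (G : Ω → β) (a : α) :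
    pmass μ F a = ∑ b, pmass μ (fun ω => (F ω, G ω)) (a, b) := by
  unfold pmass
  rw [sum_comm]
  refine sum_congr rfl fun ω _ => ?_
  simp [Prod.ext_iff, ite_and]

lemma entropy_eq_sum_neg_log_pmass [Fintype α] (F : Ω → α) :
    entropy μ F = ∑ ω, μ ω * -Real.log (pmass μ F (F ω)) := by
  have h : ∀ a, Real.negMulLog (pmass μ F a)
      = ∑ ω, if F ω = a then μ ω * -Real.log (pmass μ F a) else 0 := fun a => by
    rw [Real.negMulLog, neg_mul, ← mul_neg]
    conv_lhs => arg 1; unfold pmass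
    rw [sum_mul]
    simp only [ite_mul, zero_mul]
  rw [entropy, sum_congr rfl fun a _ => h a, sum_comm]
  simp

lemma entropy_congr [Fintype α] [Fintype β] {F : Ω → α} {G : Ω → β}
    (hFG : F.FactorsThrough G) (hGF : G.FactorsThrough F) : entropy μ F = entropy μ G := by
  simp only [entropy_eq_sum_neg_log_pmass]
  exact sum_congr rfl fun ω _ => by
    rw [pmass_congr fun ω' => ⟨fun h => hGF h, fun h => hFG h⟩]

variable {γ δ : Type*} [DecidableEq γ] [DecidableEq δ]

/-- Division-free form of `p(a, b | c) = p(a | c) p(b | c)`. -/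
def CondIndep (μ : Ω → ℝ) (f : Ω → α) (g : Ω → β) (h : Ω → γ) : Prop :=
  ∀ a b c, pmass μ (fun ω => (f ω, g ω, h ω)) (a, b, c) * pmass μ h c =
    pmass μ (fun ω => (f ω, h ω)) (a, c) * pmass μ (fun ω => (g ω, h ω)) (b, c)

lemma condIndep_of_indep [Subsingleton γ] (hμ1 : ∑ ω, μ ω = 1) {f : Ω → α} {g : Ω → β}
    (hfg : ∀ a b, pmass μ (fun ω => (f ω, g ω)) (a, b) = pmass μ f a * pmass μ g b)
    (h : Ω → γ) : CondIndep μ f g h := by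
  intro a b c
  have hc : ∀ ω, h ω = c := fun ω => Subsingleton.elim _ _
  have e₁ : pmass μ (fun ω => (f ω, g ω, h ω)) (a, b, c) = pmass μ (fun ω => (f ω, g ω)) (a, b) :=
    pmass_congr fun ω => by simp [hc]
  have e₂ : pmass μ h c = 1 := by simp [pmass, hc, hμ1]
  have e₃ : pmass μ (fun ω => (f ω, h ω)) (a, c) = pmass μ f a := pmass_congr fun ω => by simp [hc]
  have e₄ : pmass μ (fun ω => (g ω, h ω)) (b, c) = pmass μ g b := pmass_congr fun ω => by simp [hc]
  rw [e₁, e₂, e₃, e₄, mul_one, hfg]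

lemma pmass_prod_eq_sum_of_factorsThrough [Fintype β] {g : Ω → β} {g' : Ω → δ}
    (hg : g'.FactorsThrough g) (F : Ω → γ) (d : δ) (c : γ) :
    pmass μ (fun ω => (g' ω, F ω)) (d, c) =
      ∑ b, if ∃ ω, g ω = b ∧ g' ω = d then pmass μ (fun ω => (g ω, F ω)) (b, c) else 0 := by
  rw [pmass_eq_sum_pmass_prod _ g]
  refine sum_congr rfl fun b _ => ?_
  split_ifs with hb
  · obtain ⟨ω₀, hgω₀, hg'ω₀⟩ := hb
    refine pmass_congr fun ω => ?_
    simp only [Prod.mk.injEq]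
    exact ⟨fun ⟨⟨_, hF⟩, hgω⟩ => ⟨hgω, hF⟩,
      fun ⟨hgω, hF⟩ => ⟨⟨hg'ω₀ ▸ hg (hgω.trans hgω₀.symm), hF⟩, hgω⟩⟩
  · exact pmass_eq_zero fun ω hω => hb ⟨ω, by simp_all [Prod.ext_iff]⟩

namespace CondIndep

variable {f : Ω → α} {g : Ω → β} {h : Ω → γ}

lemma symm (hfg : CondIndep μ f g h) : CondIndep μ g f h := fun b a c => by
  have e : pmass μ (fun ω => (g ω, f ω, h ω)) (b, a, c) =
      pmass μ (fun ω => (f ω, g ω, h ω)) (a, b, c) :=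
    pmass_congr fun ω => by simp only [Prod.mk.injEq]; tauto
  rw [e, hfg, mul_comm]

lemma factorsThrough_right [Fintype β] {g' : Ω → δ} (hfg : CondIndep μ f g h)
    (hg : g'.FactorsThrough g) : CondIndep μ f g' h := by
  intro a d c
  have e : pmass μ (fun ω => (f ω, g' ω, h ω)) (a, d, c) =
      pmass μ (fun ω => (g' ω, f ω, h ω)) (d, a, c) :=
    pmass_congr fun ω => by simp only [Prod.mk.injEq]; tauto
  rw [e, pmass_prod_eq_sum_of_factorsThrough hg, pmass_prod_eq_sum_of_factorsThrough hg, sum_mul,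
    mul_sum]
  refine sum_congr rfl fun b _ => ?_
  split_ifs
  · rw [← hfg a b c]
    congr 1
    exact pmass_congr fun ω => by simp only [Prod.mk.injEq]; tauto
  · simp

lemma factorsThrough_left [Fintype α] {f' : Ω → δ} (hfg : CondIndep μ f g h)
    (hf : f'.FactorsThrough f) : CondIndep μ f' g h :=
  (hfg.symm.factorsThrough_right hf).symm

lemma congr_cond {h' : Ω → δ} (hfg : CondIndep μ f g h) (hh : h'.FactorsThrough h)
    (hh' : h.FactorsThrough h') : CondIndep μ f g h' := by
  intro a b c
  by_cases hc : ∃ ω₀, h' ω₀ = c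
  · obtain ⟨ω₀, rfl⟩ := hc
    have key : ∀ ω, h' ω = h' ω₀ ↔ h ω = h ω₀ := fun ω => ⟨fun e => hh' e, fun e => hh e⟩
    simpa only [pmass, Prod.mk.injEq, key] using hfg a b (h ω₀)
  · have e₁ : pmass μ (fun ω => (f ω, g ω, h' ω)) (a, b, c) = 0 :=
      pmass_eq_zero fun ω e => hc ⟨ω, (Prod.mk.inj (Prod.mk.inj e).2).2⟩
    have e₂ : pmass μ (fun ω => (f ω, h' ω)) (a, c) = 0 :=
      pmass_eq_zero fun ω e => hc ⟨ω, (Prod.mk.inj e).2⟩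
    rw [e₁, e₂, zero_mul, zero_mul]

lemma weak_union [Fintype β] [Fintype δ] (hμ : ∀ ω, 0 ≤ μ ω) {g' : Ω → δ}
    (hfg : CondIndep μ f (fun ω => (g ω, g' ω)) h) :
    CondIndep μ f g' (fun ω => (g ω, h ω)) := by
  rintro a d ⟨b, c⟩
  have H₁ := hfg a (b, d) c
  have H₂ := (hfg.factorsThrough_right (g' := g) fun _ _ e => congrArg Prod.fst e) a b c
  have e₁ : pmass μ (fun ω => (f ω, g' ω, g ω, h ω)) (a, d, b, c) =
      pmass μ (fun ω => (f ω, (g ω, g' ω), h ω)) (a, (b, d), c) :=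
    pmass_congr fun ω => by simp only [Prod.mk.injEq]; tauto
  have e₂ : pmass μ (fun ω => (g' ω, g ω, h ω)) (d, b, c) =
      pmass μ (fun ω => ((g ω, g' ω), h ω)) ((b, d), c) :=
    pmass_congr fun ω => by simp only [Prod.mk.injEq]; tauto
  rw [e₁, e₂]
  by_cases hc : pmass μ h c = 0
  · have z₁ : pmass μ (fun ω => (g ω, h ω)) (b, c) = 0 :=
      pmass_eq_zero_of_imp hμ (fun ω e => (Prod.mk.inj e).2) hc
    have z₂ : pmass μ (fun ω => ((g ω, g' ω), h ω)) ((b, d), c) = 0 :=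
      pmass_eq_zero_of_imp hμ (fun ω e => (Prod.mk.inj e).2) hc
    rw [z₁, z₂, mul_zero, mul_zero]
  · refine mul_right_cancel₀ hc ?_
    linear_combination pmass μ (fun ω => (g ω, h ω)) (b, c) * H₁ -
      pmass μ (fun ω => ((g ω, g' ω), h ω)) ((b, d), c) * H₂

lemma weak_union_left [Fintype α] [Fintype δ] (hμ : ∀ ω, 0 ≤ μ ω) {f' : Ω → δ}
    (hfg : CondIndep μ (fun ω => (f ω, f' ω)) g h) :
    CondIndep μ f' g (fun ω => (f ω, h ω)) :=
  (hfg.symm.weak_union hμ).symm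

lemma contraction (hμ : ∀ ω, 0 ≤ μ ω) {f' : Ω → δ} (hfg : CondIndep μ f g h)
    (hf'g : CondIndep μ f' g (fun ω => (f ω, h ω))) :
    CondIndep μ (fun ω => (f ω, f' ω)) g h := by
  rintro ⟨a, d⟩ b c
  have H₁ := hfg a b c
  have H₂ := hf'g d b (a, c)
  have e₁ : pmass μ (fun ω => ((f ω, f' ω), g ω, h ω)) ((a, d), b, c) =
      pmass μ (fun ω => (f' ω, g ω, f ω, h ω)) (d, b, a, c) :=
    pmass_congr fun ω => by simp only [Prod.mk.injEq]; tauto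
  have e₂ : pmass μ (fun ω => ((f ω, f' ω), h ω)) ((a, d), c) =
      pmass μ (fun ω => (f' ω, f ω, h ω)) (d, a, c) :=
    pmass_congr fun ω => by simp only [Prod.mk.injEq]; tauto
  have e₃ : pmass μ (fun ω => (g ω, f ω, h ω)) (b, a, c) =
      pmass μ (fun ω => (f ω, g ω, h ω)) (a, b, c) :=
    pmass_congr fun ω => by simp only [Prod.mk.injEq]; tauto
  rw [e₃] at H₂
  rw [e₁, e₂]
  by_cases hc : pmass μ (fun ω => (f ω, h ω)) (a, c) = 0
  · have z₁ : pmass μ (fun ω => (f' ω, g ω, f ω, h ω)) (d, b, a, c) = 0 :=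
      pmass_eq_zero_of_imp hμ (fun ω e => (Prod.mk.inj (Prod.mk.inj e).2).2) hc
    have z₂ : pmass μ (fun ω => (f' ω, f ω, h ω)) (d, a, c) = 0 :=
      pmass_eq_zero_of_imp hμ (fun ω e => (Prod.mk.inj e).2) hc
    rw [z₁, z₂, zero_mul, zero_mul]
  · refine mul_right_cancel₀ hc ?_
    linear_combination pmass μ h c * H₂ +
      pmass μ (fun ω => (f' ω, f ω, h ω)) (d, a, c) * H₁

lemma condMutualInfo_eq_zero [Fintype α] [Fintype β] [Fintype γ] (hμ : ∀ ω, 0 ≤ μ ω)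
    (hfg : CondIndep μ f g h) : condMutualInfo μ f g h = 0 := by
  simp only [condMutualInfo, entropy_eq_sum_neg_log_pmass, ← sum_add_distrib, ← sum_sub_distrib]
  -- each summand is `μ ω` times `log (p(a, b, c) p(c)) - log (p(a, c) p(b, c))` at `ω`
  refine sum_eq_zero fun ω _ => ?_
  rcases (hμ ω).eq_or_lt with hω | hω
  · rw [← hω]; ring
  · have hjoint : pmass μ (fun ω => ((f ω, g ω), h ω)) ((f ω, g ω), h ω) =
        pmass μ (fun ω => (f ω, g ω, h ω)) (f ω, g ω, h ω) :=
      pmass_congr fun ω' => by simp only [Prod.mk.injEq, and_assoc]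
    have hlog : Real.log (pmass μ (fun ω => ((f ω, g ω), h ω)) ((f ω, g ω), h ω)) +
        Real.log (pmass μ h (h ω)) = Real.log (pmass μ (fun ω => (f ω, h ω)) (f ω, h ω)) +
        Real.log (pmass μ (fun ω => (g ω, h ω)) (g ω, h ω)) := by
      rw [← Real.log_mul, ← Real.log_mul, hjoint, hfg]
      all_goals exact (pmass_self_pos hμ _ hω).ne'
    linear_combination μ ω * hlog

end CondIndep

noncomputable def condEntropy [Fintype α] [Fintype γ] (μ : Ω → ℝ) (X : Ω → α) (Z : Ω → γ) : ℝ :=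
  entropy μ (fun ω => (X ω, Z ω)) - entropy μ Z

lemma condMutualInfo_eq_condEntropy_sub [Fintype α] [Fintype β] [Fintype γ] (X : Ω → α)
    (Y : Ω → β) (Z : Ω → γ) :
    condMutualInfo μ X Y Z = condEntropy μ Y Z - condEntropy μ Y (fun ω => (X ω, Z ω)) := by
  have e : entropy μ (fun ω => (Y ω, X ω, Z ω)) = entropy μ (fun ω => ((X ω, Y ω), Z ω)) :=
    entropy_congr (fun ω ω' e => by simp_all) (fun ω ω' e => by simp_all)
  rw [condMutualInfo, condEntropy, condEntropy, e]
  ring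

lemma condEntropy_congr_cond [Fintype α] [Fintype γ] [Fintype δ] (X : Ω → α) {Z : Ω → γ}
    {Z' : Ω → δ} (hZ : Z'.FactorsThrough Z) (hZ' : Z.FactorsThrough Z') :
    condEntropy μ X Z = condEntropy μ X Z' := by
  have e : entropy μ (fun ω => (X ω, Z ω)) = entropy μ (fun ω => (X ω, Z' ω)) :=
    entropy_congr (fun ω ω' e => by obtain ⟨h₁, h₂⟩ := Prod.mk.inj e; rw [h₁, hZ' h₂])
      (fun ω ω' e => by obtain ⟨h₁, h₂⟩ := Prod.mk.inj e; rw [h₁, hZ h₂])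
  rw [condEntropy, condEntropy, e, entropy_congr hZ hZ']

lemma CondIndep.condEntropy_eq [Fintype α] [Fintype β] [Fintype γ] (hμ : ∀ ω, 0 ≤ μ ω)
    {f : Ω → α} {g : Ω → β} {h : Ω → γ} (hfg : CondIndep μ f g h) :
    condEntropy μ f (fun ω => (g ω, h ω)) = condEntropy μ f h := by
  have := hfg.symm.condMutualInfo_eq_zero hμ
  rw [condMutualInfo_eq_condEntropy_sub] at this
  linarith

lemma condEntropy_eq_sum_condEntropy_take [Fintype γ] [Fintype δ] {n : ℕ}
    (Y : Ω → Fin n → γ) (Z : Ω → δ) :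
    condEntropy μ Y Z = ∑ i : Fin n,
      condEntropy μ (fun ω => Y ω i) (fun ω => (Fin.take i i.isLt.le (Y ω), Z ω)) := by
  induction n with
  | zero =>
    rw [condEntropy, entropy_congr (G := Z)
      (fun ω ω' e => by rw [Subsingleton.elim (Y ω) (Y ω'), e])
      (fun ω ω' e => congrArg Prod.snd e)]
    simp
  | succ n ih =>
    have e : entropy μ (fun ω => (Y ω, Z ω)) =
        entropy μ (fun ω => (Y ω (Fin.last n), Fin.init (Y ω), Z ω)) :=
      entropy_congr
        (fun ω ω' e => by
          simp only [Prod.mk.injEq] at e ⊢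
          rw [← Fin.snoc_init_self (Y ω), ← Fin.snoc_init_self (Y ω'), e.1, e.2.1]
          exact ⟨rfl, e.2.2⟩)
        (fun ω ω' e => by
          simp only [Prod.mk.injEq] at e ⊢
          exact ⟨congrFun e.1 _, congrArg Fin.init e.1, e.2⟩)
    have hsplit : condEntropy μ Y Z = condEntropy μ (fun ω => Fin.init (Y ω)) Z +
        condEntropy μ (fun ω => Y ω (Fin.last n)) (fun ω => (Fin.init (Y ω), Z ω)) := by
      simp only [condEntropy, e]
      ring
    rw [hsplit, ih, Fin.sum_univ_castSucc]
    rfl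

end FiniteProbability

lemma Fin.take_succ_eq_take_succ_iff {α : Type*} {m n : ℕ} (h : m < n) {v w : Fin n → α} :
    Fin.take (m + 1) h v = Fin.take (m + 1) h w ↔
      Fin.take m h.le v = Fin.take m h.le w ∧ v ⟨m, h⟩ = w ⟨m, h⟩ := by
  rw [Fin.take_succ_eq_snoc, Fin.take_succ_eq_snoc, Fin.snoc_inj]

section CausalChannel

variable {Ω 𝒳₁ 𝒳₂ 𝒴 : Type*} [Fintype Ω] {μ : Ω → ℝ}
  [Fintype 𝒳₁] [DecidableEq 𝒳₁] [Fintype 𝒳₂] [DecidableEq 𝒳₂] [Fintype 𝒴] [DecidableEq 𝒴]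
  {N : ℕ} {X₁ : Ω → Fin N → 𝒳₁} {X₂ : Ω → Fin N → 𝒳₂} {Y : Ω → Fin N → 𝒴}

/-- The index `i : Fin N` is the paper's time `i + 1`: `Fin.take (i + 1)` is its `X^i` and
`Fin.take i` its `Y^{i-1}`. -/
def IsCausalChannel (μ : Ω → ℝ) (X₁ : Ω → Fin N → 𝒳₁) (X₂ : Ω → Fin N → 𝒳₂)
    (Y : Ω → Fin N → 𝒴) : Prop :=
  ∀ i : Fin N, CondIndep μ (fun ω => Y ω i) (fun ω => (X₁ ω, X₂ ω))
    (fun ω => (Fin.take (i + 1) i.isLt (X₁ ω), Fin.take (i + 1) i.isLt (X₂ ω),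
      Fin.take i i.isLt.le (Y ω)))

namespace IsCausalChannel

theorem condIndep_input₂_take (hc : IsCausalChannel μ X₁ X₂ Y) (hμ : ∀ ω, 0 ≤ μ ω)
    (hμ1 : ∑ ω, μ ω = 1)
    (hindep : ∀ a b, pmass μ (fun ω => (X₁ ω, X₂ ω)) (a, b) = pmass μ X₁ a * pmass μ X₂ b)
    (n : ℕ) (hn : n ≤ N) :
    CondIndep μ (fun ω => (X₁ ω, Fin.take n hn (Y ω))) X₂ (fun ω => Fin.take n hn (X₂ ω)) := by
  induction n with
  | zero =>
    exact (condIndep_of_indep hμ1 hindep _).factorsThrough_left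
      fun ω ω' e => Prod.ext e (Subsingleton.elim _ _)
  | succ n ih =>
    -- `X₂^{n+1}` is a function of `X₂`, so weak union moves it into the condition.
    have h₁ : CondIndep μ (fun ω => (X₁ ω, Fin.take n (by omega) (Y ω))) X₂
        (fun ω => Fin.take (n + 1) hn (X₂ ω)) :=
      (((ih (by omega)).factorsThrough_right (g' := fun ω => (Fin.take (n + 1) hn (X₂ ω), X₂ ω))
        (fun ω ω' e => by simp_all)).weak_union hμ).congr_cond
        (fun ω ω' e => by simp_all) (fun ω ω' e => by simp_all [Fin.take_succ_eq_take_succ_iff])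
    have h₂ : CondIndep μ (fun ω => Y ω ⟨n, hn⟩) X₂
        (fun ω => ((X₁ ω, Fin.take n (by omega) (Y ω)), Fin.take (n + 1) hn (X₂ ω))) :=
      ((hc ⟨n, hn⟩).weak_union hμ).congr_cond (fun ω ω' e => by simp_all)
        (fun ω ω' e => by simp_all)
    exact (h₁.contraction hμ h₂).factorsThrough_left
      fun ω ω' e => by simp_all [Fin.take_succ_eq_take_succ_iff]

theorem condEntropy_output_cond_input₂_eq_take (hc : IsCausalChannel μ X₁ X₂ Y) (hμ : ∀ ω, 0 ≤ μ ω)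
    (hμ1 : ∑ ω, μ ω = 1)
    (hindep : ∀ a b, pmass μ (fun ω => (X₁ ω, X₂ ω)) (a, b) = pmass μ X₁ a * pmass μ X₂ b)
    (i : Fin N) :
    condEntropy μ (fun ω => Y ω i) (fun ω => (Fin.take i i.isLt.le (Y ω), X₂ ω)) =
      condEntropy μ (fun ω => Y ω i)
        (fun ω => (Fin.take i i.isLt.le (Y ω), Fin.take (i + 1) i.isLt (X₂ ω))) := by
  have hci : CondIndep μ (fun ω => Y ω i) X₂
      (fun ω => (Fin.take i i.isLt.le (Y ω), Fin.take (i + 1) i.isLt (X₂ ω))) :=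
    ((hc.condIndep_input₂_take hμ hμ1 hindep (i + 1) i.isLt).factorsThrough_left
      (f' := fun ω => (Fin.take i i.isLt.le (Y ω), Y ω i))
      (fun ω ω' e => by simp_all [Fin.take_succ_eq_take_succ_iff])).weak_union_left hμ
  rw [← hci.condEntropy_eq hμ]
  exact condEntropy_congr_cond _ (fun ω ω' e => by simp_all) (fun ω ω' e => by simp_all)

theorem condEntropy_output_cond_inputs_eq_take (hc : IsCausalChannel μ X₁ X₂ Y) (hμ : ∀ ω, 0 ≤ μ ω)
    (i : Fin N) :
    condEntropy μ (fun ω => Y ω i) (fun ω => (Fin.take i i.isLt.le (Y ω), X₁ ω, X₂ ω)) =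
      condEntropy μ (fun ω => Y ω i) (fun ω => (Fin.take (i + 1) i.isLt (X₁ ω),
        Fin.take i i.isLt.le (Y ω), Fin.take (i + 1) i.isLt (X₂ ω))) :=
  calc _ = condEntropy μ (fun ω => Y ω i) (fun ω => ((X₁ ω, X₂ ω),
        Fin.take (i + 1) i.isLt (X₁ ω), Fin.take (i + 1) i.isLt (X₂ ω),
        Fin.take i i.isLt.le (Y ω))) :=
      condEntropy_congr_cond _ (fun ω ω' e => by simp_all) (fun ω ω' e => by simp_all)
    _ = _ := (hc i).condEntropy_eq hμ
    _ = _ := condEntropy_congr_cond _ (fun ω ω' e => by simp_all) (fun ω ω' e => by simp_all)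

end IsCausalChannel

end CausalChannel

theorem condMutualInfo_eq_directedInfo_of_no_feedback_general
    {Ω 𝒳₁ 𝒳₂ 𝒴 : Type*} [Fintype Ω]
    [Fintype 𝒳₁] [DecidableEq 𝒳₁]
    [Fintype 𝒳₂] [DecidableEq 𝒳₂]
    [Fintype 𝒴] [DecidableEq 𝒴]
    {N : ℕ}
    (μ : Ω → ℝ) (hμ0 : ∀ ω, 0 ≤ μ ω) (hμ1 : ∑ ω, μ ω = 1)
    (X₁ : Ω → Fin N → 𝒳₁) (X₂ : Ω → Fin N → 𝒳₂) (Y : Ω → Fin N → 𝒴)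
    (hIndep : ∀ (a : Fin N → 𝒳₁) (b : Fin N → 𝒳₂),
      pmass μ (fun ω => (X₁ ω, X₂ ω)) (a, b) = pmass μ X₁ a * pmass μ X₂ b)
    (hCausal : ∀ i : Fin N, ∀ (yi : 𝒴) (a : Fin N → 𝒳₁) (b : Fin N → 𝒳₂)
      (c₁ : Fin ((i : ℕ) + 1) → 𝒳₁) (c₂ : Fin ((i : ℕ) + 1) → 𝒳₂) (c₃ : Fin (i : ℕ) → 𝒴),
      pmass μ (fun ω => (Y ω i, (X₁ ω, X₂ ω),
          ((fun j : Fin ((i : ℕ) + 1) => X₁ ω (Fin.castLE i.isLt j)),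
           (fun j : Fin ((i : ℕ) + 1) => X₂ ω (Fin.castLE i.isLt j)),
           (fun j : Fin (i : ℕ) => Y ω (Fin.castLE i.isLt.le j)))))
          (yi, (a, b), (c₁, c₂, c₃)) *
        pmass μ (fun ω =>
          ((fun j : Fin ((i : ℕ) + 1) => X₁ ω (Fin.castLE i.isLt j)),
           (fun j : Fin ((i : ℕ) + 1) => X₂ ω (Fin.castLE i.isLt j)),
           (fun j : Fin (i : ℕ) => Y ω (Fin.castLE i.isLt.le j)))) (c₁, c₂, c₃) =
      pmass μ (fun ω => (Y ω i,
          ((fun j : Fin ((i : ℕ) + 1) => X₁ ω (Fin.castLE i.isLt j)),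
           (fun j : Fin ((i : ℕ) + 1) => X₂ ω (Fin.castLE i.isLt j)),
           (fun j : Fin (i : ℕ) => Y ω (Fin.castLE i.isLt.le j))))) (yi, (c₁, c₂, c₃)) *
        pmass μ (fun ω => ((X₁ ω, X₂ ω),
          ((fun j : Fin ((i : ℕ) + 1) => X₁ ω (Fin.castLE i.isLt j)),
           (fun j : Fin ((i : ℕ) + 1) => X₂ ω (Fin.castLE i.isLt j)),
           (fun j : Fin (i : ℕ) => Y ω (Fin.castLE i.isLt.le j)))))
          ((a, b), (c₁, c₂, c₃))) :
    condMutualInfo μ X₁ Y X₂ =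
      ∑ i : Fin N, condMutualInfo μ
        (fun ω => fun j : Fin ((i : ℕ) + 1) => X₁ ω (Fin.castLE i.isLt j))
        (fun ω => Y ω i)
        (fun ω => ((fun j : Fin (i : ℕ) => Y ω (Fin.castLE i.isLt.le j)),
          (fun j : Fin ((i : ℕ) + 1) => X₂ ω (Fin.castLE i.isLt j)))) := by
  have hc : IsCausalChannel μ X₁ X₂ Y := fun i y ⟨a, b⟩ ⟨c₁, c₂, c₃⟩ => hCausal i y a b c₁ c₂ c₃
  calc condMutualInfo μ X₁ Y X₂
      = condEntropy μ Y X₂ - condEntropy μ Y (fun ω => (X₁ ω, X₂ ω)) :=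
        condMutualInfo_eq_condEntropy_sub X₁ Y X₂
    _ = ∑ i : Fin N,
          (condEntropy μ (fun ω => Y ω i) (fun ω => (Fin.take i i.isLt.le (Y ω), X₂ ω)) -
            condEntropy μ (fun ω => Y ω i)
              (fun ω => (Fin.take i i.isLt.le (Y ω), X₁ ω, X₂ ω))) := by
        rw [condEntropy_eq_sum_condEntropy_take Y X₂, condEntropy_eq_sum_condEntropy_take Y,
          ← sum_sub_distrib]
    _ = _ := sum_congr rfl fun i _ => by
        rw [hc.condEntropy_output_cond_input₂_eq_take hμ0 hμ1 hIndep i,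
          hc.condEntropy_output_cond_inputs_eq_take hμ0 i, condMutualInfo_eq_condEntropy_sub]
        rfl

/-- If (i) `X₁^N` and `X₂^N` are independent (no feedback) and (ii) for each `i` the output
`Y_i` is conditionally independent of `(X₁^N, X₂^N)` given `(X₁^i, X₂^i, Y^{i-1})`
(causality of the channel), then
`I(X₁^N ; Y^N | X₂^N) = I(X₁^N → Y^N ‖ X₂^N) = ∑_{i=1}^N I(X₁^i ; Y_i | Y^{i-1}, X₂^i)`. -/
theorem condMutualInfo_eq_directedInfo_of_no_feedback
    {Ω 𝒳₁ 𝒳₂ 𝒴 : Type*} [Fintype Ω]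
    [Fintype 𝒳₁] [DecidableEq 𝒳₁] [Nonempty 𝒳₁]
    [Fintype 𝒳₂] [DecidableEq 𝒳₂] [Nonempty 𝒳₂]
    [Fintype 𝒴] [DecidableEq 𝒴] [Nonempty 𝒴]
    {N : ℕ} (hN : 1 ≤ N)
    (μ : Ω → ℝ) (hμ0 : ∀ ω, 0 ≤ μ ω) (hμ1 : ∑ ω, μ ω = 1)
    (X₁ : Ω → Fin N → 𝒳₁) (X₂ : Ω → Fin N → 𝒳₂) (Y : Ω → Fin N → 𝒴)
    (hIndep : ∀ (a : Fin N → 𝒳₁) (b : Fin N → 𝒳₂),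
      pmass μ (fun ω => (X₁ ω, X₂ ω)) (a, b) = pmass μ X₁ a * pmass μ X₂ b)
    (hCausal : ∀ i : Fin N, ∀ (yi : 𝒴) (a : Fin N → 𝒳₁) (b : Fin N → 𝒳₂)
      (c₁ : Fin ((i : ℕ) + 1) → 𝒳₁) (c₂ : Fin ((i : ℕ) + 1) → 𝒳₂) (c₃ : Fin (i : ℕ) → 𝒴),
      pmass μ (fun ω => (Y ω i, (X₁ ω, X₂ ω),
          ((fun j : Fin ((i : ℕ) + 1) => X₁ ω (Fin.castLE i.isLt j)),
           (fun j : Fin ((i : ℕ) + 1) => X₂ ω (Fin.castLE i.isLt j)),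
           (fun j : Fin (i : ℕ) => Y ω (Fin.castLE i.isLt.le j)))))
          (yi, (a, b), (c₁, c₂, c₃)) *
        pmass μ (fun ω =>
          ((fun j : Fin ((i : ℕ) + 1) => X₁ ω (Fin.castLE i.isLt j)),
           (fun j : Fin ((i : ℕ) + 1) => X₂ ω (Fin.castLE i.isLt j)),
           (fun j : Fin (i : ℕ) => Y ω (Fin.castLE i.isLt.le j)))) (c₁, c₂, c₃) =
      pmass μ (fun ω => (Y ω i,
          ((fun j : Fin ((i : ℕ) + 1) => X₁ ω (Fin.castLE i.isLt j)),
           (fun j : Fin ((i : ℕ) + 1) => X₂ ω (Fin.castLE i.isLt j)),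
           (fun j : Fin (i : ℕ) => Y ω (Fin.castLE i.isLt.le j))))) (yi, (c₁, c₂, c₃)) *
        pmass μ (fun ω => ((X₁ ω, X₂ ω),
          ((fun j : Fin ((i : ℕ) + 1) => X₁ ω (Fin.castLE i.isLt j)),
           (fun j : Fin ((i : ℕ) + 1) => X₂ ω (Fin.castLE i.isLt j)),
           (fun j : Fin (i : ℕ) => Y ω (Fin.castLE i.isLt.le j)))))
          ((a, b), (c₁, c₂, c₃))) :
    condMutualInfo μ X₁ Y X₂ =
      ∑ i : Fin N, condMutualInfo μ
        (fun ω => fun j : Fin ((i : ℕ) + 1) => X₁ ω (Fin.castLE i.isLt j))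
        (fun ω => Y ω i)
        (fun ω => ((fun j : Fin (i : ℕ) => Y ω (Fin.castLE i.isLt.le j)),
          (fun j : Fin ((i : ℕ) + 1) => X₂ ω (Fin.castLE i.isLt j)))) :=
  condMutualInfo_eq_directedInfo_of_no_feedback_general μ hμ0 hμ1 X₁ X₂ Y hIndep hCausal
end
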